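/- Let N = 2^J, let x ∈ ℝ^N have nonnegative entries, and let x̂ = F_N x. Fix j with 0 ≤ j ≤ J-1, an index μ with 0 ≤ μ < 2^j, and L with 0 ≤ L ≤ j, and assume the support of x^(j) is contained in { (μ + r) mod 2^j : 0 ≤ r < 2^L }. Then for every 0 ≤ p < 2^L, x̂_{2^{J-L} p + 2^{J-j-1}} = Σ_{r=0}^{2^L - 1} ω_{2^{j+1}}^{ (2^{j+1-L} p + 1) ((μ + r) mod 2^j) } ( 2 x̃_{0,r} − x̃_r ), where x̃_{0,r} = x_{(μ+r) mod 2^j}^(j+1) and x̃_r = x_{(μ+r) mod 2^j}^(j). -/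
import Mathlib


open Complex Finset

/-- `ω_M = e^{-2πi/M}`. -/
noncomputable def dftOmega (M : ℕ) : ℂ := Complex.exp (-2 * Real.pi * Complex.I / M)

/-- Discrete Fourier transform of length `M`: `(F_M v)_k = Σ_{r<M} ω_M^{k r} v_r`. -/
noncomputable def dft (M : ℕ) (v : ℕ → ℂ) (k : ℕ) : ℂ :=
  ∑ r ∈ Finset.range M, dftOmega M ^ (k * r) * v r

/-- The `2^j`-periodization of a vector `x ∈ ℝ^{2^J}`:
`x^(j)_k = Σ_{ℓ < 2^{J-j}} x_{k + 2^j ℓ}`. -/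
noncomputable def periodization (J j : ℕ) (x : ℕ → ℝ) (k : ℕ) : ℝ :=
  ∑ ℓ ∈ Finset.range (2 ^ (J - j)), x (k + 2 ^ j * ℓ)

lemma aux_sum_mul {β : Type*} [AddCommMonoid β] (a : ℕ) (f : ℕ → β) :
    ∀ b, ∑ n ∈ Finset.range (a * b), f n
      = ∑ m ∈ Finset.range a, ∑ ℓ ∈ Finset.range b, f (m + a * ℓ)
  | 0 => by simp
  | (b+1) => by
    rw [mul_add, mul_one, Finset.sum_range_add, aux_sum_mul a f b]
    simp [Finset.sum_range_succ, Finset.sum_add_distrib, add_comm]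

lemma aux_sum_two_mul {β : Type*} [AddCommMonoid β] (g : ℕ → β) :
    ∀ d, ∑ ℓ ∈ Finset.range (2 * d), g ℓ
      = ∑ t ∈ Finset.range d, (g (2 * t) + g (2 * t + 1))
  | 0 => by simp
  | (d+1) => by
    rw [mul_add, mul_one, Finset.sum_range_add, aux_sum_two_mul g d]
    simp [Finset.sum_range_succ, add_assoc]

lemma dftOmega_mul_pow (a b : ℕ) (ha : a ≠ 0) (hb : b ≠ 0) :
    dftOmega (a * b) ^ a = dftOmega b := by
  unfold dftOmega
  rw [← Complex.exp_nat_mul]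
  congr 1
  have ha' : (a:ℂ) ≠ 0 := Nat.cast_ne_zero.2 ha
  have hb' : (b:ℂ) ≠ 0 := Nat.cast_ne_zero.2 hb
  push_cast
  field_simp

lemma dftOmega_pow_self (M : ℕ) (hM : M ≠ 0) : dftOmega M ^ M = 1 := by
  unfold dftOmega
  rw [← Complex.exp_nat_mul]
  have hM' : (M:ℂ) ≠ 0 := Nat.cast_ne_zero.2 hM
  have : (M:ℂ) * (-2 * Real.pi * Complex.I / M) = -(2 * Real.pi * Complex.I) := by
    field_simp
  rw [this, Complex.exp_neg, Complex.exp_two_pi_mul_I, inv_one]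

lemma dftOmega_two_mul_pow (b : ℕ) (hb : b ≠ 0) : dftOmega (2 * b) ^ b = -1 := by
  unfold dftOmega
  rw [← Complex.exp_nat_mul]
  have hb' : (b:ℂ) ≠ 0 := Nat.cast_ne_zero.2 hb
  have : (b:ℂ) * (-2 * Real.pi * Complex.I / (((2 * b : ℕ)):ℂ)) = -(Real.pi * Complex.I) := by
    push_cast
    field_simp
  rw [this, Complex.exp_neg, Complex.exp_pi_mul_I]
  norm_num

/-- under the short-support assumption on `x^(j)`, for every `0 ≤ p < 2^L`,
`x̂_{2^{J-L}p + 2^{J-j-1}} = Σ_{r<2^L} ω_{2^{j+1}}^{(2^{j+1-L}p+1)((μ+r) mod 2^j)}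
(2 x̃_{0,r} − x̃_r)`. -/
theorem restricted_sampled_system (J : ℕ) (x : ℕ → ℝ) (hx : ∀ k, 0 ≤ x k)
    (j : ℕ) (hj : j + 1 ≤ J) (μ : ℕ) (hμ : μ < 2 ^ j) (L : ℕ) (hL : L ≤ j)
    (hsupp : ∀ k < 2 ^ j, periodization J j x k ≠ 0 →
      ∃ r < 2 ^ L, k = (μ + r) % 2 ^ j)
    (p : ℕ) (hp : p < 2 ^ L) :
    dft (2 ^ J) (fun n => (x n : ℂ)) (2 ^ (J - L) * p + 2 ^ (J - j - 1))
      = ∑ r ∈ Finset.range (2 ^ L),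
          dftOmega (2 ^ (j + 1)) ^ ((2 ^ (j + 1 - L) * p + 1) * ((μ + r) % 2 ^ j)) *
            (2 * (periodization J (j + 1) x ((μ + r) % 2 ^ j) : ℂ)
              - (periodization J j x ((μ + r) % 2 ^ j) : ℂ)) := by
  set k0 := 2 ^ (J - L) * p + 2 ^ (J - j - 1) with hk0
  have hd : (2:ℕ) ^ (J - j) = 2 * 2 ^ (J - j - 1) := by
    rw [← pow_succ']; congr 1; omega
  have hωk : dftOmega (2 ^ J) ^ (2 ^ j * k0) = -1 := by
    have e1 : 2 ^ j * k0 = 2 ^ J * (2 ^ (j - L) * p) + 2 ^ (J - 1) := by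
      have a1 : (2:ℕ) ^ j * 2 ^ (J - L) = 2 ^ J * 2 ^ (j - L) := by
        rw [← pow_add, ← pow_add]; congr 1; omega
      have a2 : (2:ℕ) ^ j * 2 ^ (J - j - 1) = 2 ^ (J - 1) := by
        rw [← pow_add]; congr 1; omega
      rw [hk0, mul_add, ← mul_assoc, a1, a2, mul_assoc]
    rw [e1, pow_add, pow_mul, dftOmega_pow_self _ (by positivity), one_pow, one_mul]
    have e2 : (2:ℕ) ^ J = 2 * 2 ^ (J - 1) := by rw [← pow_succ']; congr 1; omega
    rw [e2]
    exact dftOmega_two_mul_pow _ (by positivity)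
  have hωW : ∀ m : ℕ, dftOmega (2 ^ J) ^ (k0 * m)
      = dftOmega (2 ^ (j + 1)) ^ ((2 ^ (j + 1 - L) * p + 1) * m) := by
    intro m
    have e3 : k0 * m = 2 ^ (J - j - 1) * ((2 ^ (j + 1 - L) * p + 1) * m) := by
      rw [hk0]
      have e5 : (2:ℕ) ^ (J - L) = 2 ^ (J - j - 1) * 2 ^ (j + 1 - L) := by
        rw [← pow_add]; congr 1; omega
      rw [e5]; ring
    have e4 : (2:ℕ) ^ J = 2 ^ (J - j - 1) * 2 ^ (j + 1) := by
      rw [← pow_add]; congr 1; omega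
    rw [e3, pow_mul, e4, dftOmega_mul_pow _ _ (by positivity) (by positivity)]
  have step1 : dft (2 ^ J) (fun n => (x n : ℂ)) k0
      = ∑ m ∈ Finset.range (2 ^ j),
          dftOmega (2 ^ (j + 1)) ^ ((2 ^ (j + 1 - L) * p + 1) * m) *
            (2 * (periodization J (j + 1) x m : ℂ) - (periodization J j x m : ℂ)) := by
    have h := aux_sum_mul (2 ^ j)
      (fun n => dftOmega (2 ^ J) ^ (k0 * n) * (x n : ℂ)) (2 ^ (J - j))
    rw [show (2:ℕ) ^ j * 2 ^ (J - j) = 2 ^ J by rw [← pow_add]; congr 1; omega] at h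
    rw [dft, h]
    refine Finset.sum_congr rfl fun m _ => ?_
    have hin : ∀ ℓ, dftOmega (2 ^ J) ^ (k0 * (m + 2 ^ j * ℓ)) * (x (m + 2 ^ j * ℓ) : ℂ)
        = dftOmega (2 ^ J) ^ (k0 * m) * ((-1 : ℂ) ^ ℓ * (x (m + 2 ^ j * ℓ) : ℂ)) := by
      intro ℓ
      have e6 : k0 * (m + 2 ^ j * ℓ) = k0 * m + (2 ^ j * k0) * ℓ := by ring
      rw [e6, pow_add, pow_mul (dftOmega (2 ^ J)) (2 ^ j * k0) ℓ, hωk]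
      ring
    simp only [hin]
    rw [← Finset.mul_sum, hωW]
    congr 1
    simp only [periodization]
    rw [hd, aux_sum_two_mul (fun ℓ => (-1 : ℂ) ^ ℓ * (x (m + 2 ^ j * ℓ) : ℂ)),
      aux_sum_two_mul (fun ℓ => x (m + 2 ^ j * ℓ)),
      show J - (j + 1) = J - j - 1 from by omega]
    push_cast
    rw [Finset.mul_sum, ← Finset.sum_sub_distrib]
    refine Finset.sum_congr rfl fun t _ => ?_
    have e7 : m + 2 ^ (j + 1) * t = m + 2 ^ j * (2 * t) := by rw [pow_succ]; ring
    rw [e7]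
    have h1 : ((-1:ℂ)) ^ (2 * t) = 1 := by rw [pow_mul]; norm_num
    have h2 : ((-1:ℂ)) ^ (2 * t + 1) = -1 := by rw [pow_add, pow_mul]; norm_num
    rw [h1, h2]
    ring
  have hperzero : ∀ m ∈ Finset.range (2 ^ j),
      m ∉ (Finset.range (2 ^ L)).image (fun r => (μ + r) % 2 ^ j) →
      (2 * (periodization J (j + 1) x m : ℂ) - (periodization J j x m : ℂ)) = 0 := by
    intro m hm hnot
    have hpj : periodization J j x m = 0 := by
      by_contra h
      obtain ⟨r, hr, hmr⟩ := hsupp m (Finset.mem_range.1 hm) h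
      exact hnot (Finset.mem_image.2 ⟨r, Finset.mem_range.2 hr, hmr.symm⟩)
    have hall : ∀ ℓ < 2 ^ (J - j), x (m + 2 ^ j * ℓ) = 0 := by
      intro ℓ hℓ
      simp only [periodization] at hpj
      exact (Finset.sum_eq_zero_iff_of_nonneg (fun i _ => hx _)).1 hpj ℓ (Finset.mem_range.2 hℓ)
    have hpj1 : periodization J (j + 1) x m = 0 := by
      simp only [periodization]
      refine Finset.sum_eq_zero fun t ht => ?_
      have ht' : t < 2 ^ (J - (j + 1)) := Finset.mem_range.1 ht
      have hdd : (2:ℕ) ^ (J - j) = 2 * 2 ^ (J - (j + 1)) := by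
        rw [← pow_succ']; congr 1; omega
      have h2t : 2 * t < 2 ^ (J - j) := by omega
      have e8 : m + 2 ^ (j + 1) * t = m + 2 ^ j * (2 * t) := by rw [pow_succ]; ring
      rw [e8]
      exact hall _ h2t
    rw [hpj, hpj1]
    simp
  have hsub : (Finset.range (2 ^ L)).image (fun r => (μ + r) % 2 ^ j)
      ⊆ Finset.range (2 ^ j) := by
    intro m hm
    obtain ⟨r, _, rfl⟩ := Finset.mem_image.1 hm
    exact Finset.mem_range.2 (Nat.mod_lt _ (pow_pos two_pos j))
  have hinj : ∀ r1 ∈ Finset.range (2 ^ L), ∀ r2 ∈ Finset.range (2 ^ L),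
      (μ + r1) % 2 ^ j = (μ + r2) % 2 ^ j → r1 = r2 := by
    intro r1 h1 r2 h2 h
    have hLj : (2:ℕ) ^ L ≤ 2 ^ j := Nat.pow_le_pow_right (by norm_num) hL
    have e1 : r1 < 2 ^ j := lt_of_lt_of_le (Finset.mem_range.1 h1) hLj
    have e2 : r2 < 2 ^ j := lt_of_lt_of_le (Finset.mem_range.1 h2) hLj
    have h' : Nat.ModEq (2 ^ j) (μ + r1) (μ + r2) := h
    have := Nat.ModEq.add_left_cancel' μ h'
    rwa [Nat.ModEq, Nat.mod_eq_of_lt e1, Nat.mod_eq_of_lt e2] at this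
  rw [step1,
    ← Finset.sum_subset hsub (fun m hm hnm => by rw [hperzero m hm hnm, mul_zero]),
    Finset.sum_image hinj]
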